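/- arXiv:1906.04782 — 8 statements merged into one kernel-verified Lean document; each statement's English description precedes it below -/
import Mathlib

section
/- Let ν ∈ (0,1), let ι be a finite index set, let m : ι → ℝ, let a ∈ ι, and let y ≥ 0. If the normalized belief is b[x] = exp(m[x])/Σ_{l∈ι} exp(m[l]) and the observation likelihood is f(y|x,a) = (ν·exp(−νy))^{δ[a,x]} · (exp(−y))^{1−δ[a,x]} (where δ[a,x] = 1 if x = a and 0 otherwise), then the Bayes posterior satisfies, for every x ∈ ι, f(y|x,a)·b[x] / Σ_{l∈ι} f(y|l,a)·b[l] = exp(m'[x]) / Σ_{l∈ι} exp(m'[l]), where m'[x] = m[x] + J(y)·δ[a,x] and J(y) = (1−ν)y + ln ν. -/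
open Real MeasureTheory Finset

set_option linter.unusedSectionVars false

noncomputable section

variable {ι : Type*} [Fintype ι] [DecidableEq ι]

/-- The log-likelihood update function `J(y) = (1-ν)y + ln ν`. -/
def Jfun (ν y : ℝ) : ℝ := (1 - ν) * y + Real.log ν

/-- `h(ν) = exp(ν ln ν/(1-ν)) - exp(ln ν/(1-ν))`. -/
def hfun (ν : ℝ) : ℝ :=
  Real.exp (ν * Real.log ν / (1 - ν)) - Real.exp (Real.log ν / (1 - ν))

/-- `g(ν) = exp(ln ν/(1-ν)) (1/(ν+1) - ln ν/(1-ν))`. -/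
def gfun (ν : ℝ) : ℝ :=
  Real.exp (Real.log ν / (1 - ν)) * (1 / (ν + 1) - Real.log ν / (1 - ν))

/-- Kronecker delta `δ[a,x]` as a real number. -/
def kdelta (a x : ι) : ℝ := if x = a then 1 else 0

theorem univ_nonempty_of_card (hcard : 2 ≤ Fintype.card ι) :
    (Finset.univ : Finset ι).Nonempty := by
  rw [← Finset.card_pos]
  have : (Finset.univ : Finset ι).card = Fintype.card ι := rfl
  omega

theorem erase_nonempty_of_card (hcard : 2 ≤ Fintype.card ι) (a : ι) :
    ((Finset.univ : Finset ι).erase a).Nonempty := by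
  rw [← Finset.card_pos, Finset.card_erase_of_mem (Finset.mem_univ a)]
  have : (Finset.univ : Finset ι).card = Fintype.card ι := rfl
  omega

theorem pairs_nonempty_of_card (hcard : 2 ≤ Fintype.card ι) :
    ((Finset.univ : Finset (ι × ι)).filter fun p => p.1 ≠ p.2).Nonempty := by
  obtain ⟨a, b, hab⟩ := Fintype.exists_pair_of_one_lt_card (α := ι) (by omega)
  exact ⟨(a, b), by simp [hab]⟩

/-- `max_{â ≠ a} m[â]`. -/
def maxOther (hcard : 2 ≤ Fintype.card ι) (m : ι → ℝ) (a : ι) : ℝ :=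
  ((Finset.univ : Finset ι).erase a).sup' (erase_nonempty_of_card hcard a) m

/-- `ξ(a; m)`. -/
def xi (ν : ℝ) (hcard : 2 ≤ Fintype.card ι) (m : ι → ℝ) (a : ι) : ℝ :=
  if maxOther hcard m a - m a < Real.log ν then Real.exp (m a)
  else Real.exp (maxOther hcard m a)
    + hfun ν * Real.exp ((m a - ν * maxOther hcard m a) / (1 - ν))

/-- `min_{x_i ≠ x_j} (m[x_i] - ν m[x_j])`, over ordered pairs of distinct indices. -/
def minPair (ν : ℝ) (hcard : 2 ≤ Fintype.card ι) (m : ι → ℝ) : ℝ :=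
  (((Finset.univ : Finset (ι × ι)).filter fun p => p.1 ≠ p.2).inf'
    (pairs_nonempty_of_card hcard)) (fun p => m p.1 - ν * m p.2)

/-- The feedback density `f(y | m, a) = b[a] ν e^{-νy} + (1-b[a]) e^{-y}`. -/
def fdens (ν : ℝ) (m : ι → ℝ) (a : ι) (y : ℝ) : ℝ :=
  (Real.exp (m a) / ∑ l, Real.exp (m l)) * (ν * Real.exp (-ν * y))
    + (1 - Real.exp (m a) / ∑ l, Real.exp (m l)) * Real.exp (-y)

/-- Terminal value `V_L(m) = max_x exp(m[x]) / ∑_l exp(m[l])`. -/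
def Vterm (hcard : 2 ≤ Fintype.card ι) (m : ι → ℝ) : ℝ :=
  ((Finset.univ : Finset ι).sup' (univ_nonempty_of_card hcard) fun x => Real.exp (m x))
    / ∑ l, Real.exp (m l)


/-- the Bayes posterior under the observation likelihood is again a softmax
with preferences updated by `m'[x] = m[x] + J(y) δ[a,x]` (Lemma 1 of the paper). -/
theorem preference_update
    (ν : ℝ) (hν : ν ∈ Set.Ioo (0:ℝ) 1)
    (m : ι → ℝ) (a : ι) (y : ℝ) (hy : 0 ≤ y)
    (b : ι → ℝ) (hb : ∀ x, b x = Real.exp (m x) / ∑ l, Real.exp (m l))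
    (f : ι → ℝ)
    (hf : ∀ x, f x = (ν * Real.exp (-ν * y)) ^ (kdelta a x)
        * (Real.exp (-y)) ^ (1 - kdelta a x))
    (m' : ι → ℝ) (hm' : ∀ x, m' x = m x + Jfun ν y * kdelta a x) :
    ∀ x, f x * b x / ∑ l, f l * b l
      = Real.exp (m' x) / ∑ l, Real.exp (m' l) := by
  obtain ⟨hν0, hν1⟩ := hν
  set S : ℝ := ∑ l, Real.exp (m l) with hS
  have key : ∀ x, f x * b x = (Real.exp (-y) / S) * Real.exp (m' x) := by
    intro x
    rw [hf x, hb x, hm' x, kdelta, Jfun]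
    by_cases hx : x = a
    · simp only [hx, if_pos rfl, if_true, Real.rpow_one, sub_self, Real.rpow_zero, mul_one]
      rw [Real.exp_add, Real.exp_add, Real.exp_log hν0,
        show -ν * y = -y + (1 - ν) * y by ring, Real.exp_add]
      ring
    · simp only [if_neg hx, Real.rpow_zero, one_mul, sub_zero, Real.rpow_one, mul_zero, add_zero]
      ring
  have hSpos : 0 < S := Finset.sum_pos (fun l _ => Real.exp_pos _) ⟨a, Finset.mem_univ a⟩
  have hc : Real.exp (-y) / S ≠ 0 := ne_of_gt (div_pos (Real.exp_pos _) hSpos)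
  intro x
  rw [key x, Finset.sum_congr rfl (fun l _ => key l), ← Finset.mul_sum,
    mul_div_mul_left _ _ hc]

end
end

section
/- Let ν ∈ (0,1), let ι be a finite index set with |ι| ≥ 2, let m : ι → ℝ and a ∈ ι. Then ∫₀^∞ exp( max_{x∈ι} ( m[x] + J(y)·δ[a,x] ) ) · exp(−y) dy = ξ(a;m), where J(y) = (1−ν)y + ln ν and δ[a,x] is the Kronecker delta. -/
open Real MeasureTheory Finset

set_option linter.unusedSectionVars false

noncomputable section

variable {ι : Type*} [Fintype ι] [DecidableEq ι]

/-! Splitting off the index `a`, the exponent is `max (m a + J y) M` with `M = max_{â ≠ a} m â`.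
Since `J` is increasing with `J 0 = log ν`, either `m a + J y` wins for every `y > 0`
(when `M - m a < log ν`), or exactly for `y` beyond the threshold `c` solving `m a + J c = M`.
On each piece the integrand is `e^M e^{-y}` or `e^{m a} ν e^{-ν y}`, integrated in closed form. -/

section Update

variable {ν : ℝ}

/-- The point `y` where `A + J(y) = M`. -/
def updateThreshold (ν A M : ℝ) : ℝ := (M - A - log ν) / (1 - ν)

lemma add_Jfun_le_iff (hν1 : ν < 1) (A M y : ℝ) :
    A + Jfun ν y ≤ M ↔ y ≤ updateThreshold ν A M := by
  rw [updateThreshold, le_div_iff₀ (by linarith), Jfun]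
  constructor <;> intro h <;> linarith

lemma exp_add_Jfun_mul_exp_neg (hν0 : 0 < ν) (A y : ℝ) :
    exp (A + Jfun ν y) * exp (-y) = exp A * ν * exp (-ν * y) := by
  rw [← exp_log hν0, ← exp_add, ← exp_add, ← exp_add, exp_log hν0, Jfun]
  ring_nf

lemma integrableOn_exp_add_Jfun_mul_exp_neg (hν0 : 0 < ν) (A c : ℝ) :
    IntegrableOn (fun y => exp (A + Jfun ν y) * exp (-y)) (Set.Ioi c) := by
  simp only [exp_add_Jfun_mul_exp_neg hν0]
  exact (exp_neg_integrableOn_Ioi c hν0).const_mul _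

lemma integral_exp_add_Jfun_mul_exp_neg (hν0 : 0 < ν) (A c : ℝ) :
    ∫ y in Set.Ioi c, exp (A + Jfun ν y) * exp (-y) = exp A * exp (-ν * c) := by
  simp only [exp_add_Jfun_mul_exp_neg hν0]
  rw [integral_const_mul, integral_exp_mul_Ioi (by linarith)]
  field_simp

lemma integral_exp_max_add_Jfun_of_lt (hν : ν ∈ Set.Ioo 0 1) {A M : ℝ} (h : M - A < log ν) :
    ∫ y in Set.Ioi 0, exp (max (A + Jfun ν y) M) * exp (-y) = exp A := by
  have hmax : ∀ y ∈ Set.Ioi (0 : ℝ), max (A + Jfun ν y) M = A + Jfun ν y := fun y hy =>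
    max_eq_left <| by
      have : 0 < (1 - ν) * y := mul_pos (by linarith [hν.2]) hy
      rw [Jfun]; linarith
  rw [setIntegral_congr_fun measurableSet_Ioi fun y hy => by rw [hmax y hy],
    integral_exp_add_Jfun_mul_exp_neg hν.1]
  simp

lemma integral_exp_max_add_Jfun_eq_split (hν : ν ∈ Set.Ioo 0 1) {A M : ℝ}
    (hc0 : 0 ≤ updateThreshold ν A M) :
    ∫ y in Set.Ioi 0, exp (max (A + Jfun ν y) M) * exp (-y)
      = exp M * (1 - exp (-updateThreshold ν A M))
        + exp A * exp (-ν * updateThreshold ν A M) := by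
  set c := updateThreshold ν A M
  have below : ∀ y ∈ Set.Ioc 0 c, exp (max (A + Jfun ν y) M) * exp (-y) = exp M * exp (-y) :=
    fun y hy => by rw [max_eq_right ((add_Jfun_le_iff hν.2 A M y).2 hy.2)]
  have above : ∀ y ∈ Set.Ioi c,
      exp (max (A + Jfun ν y) M) * exp (-y) = exp (A + Jfun ν y) * exp (-y) := fun y hy => by
    rw [max_eq_left (le_of_not_ge fun hle => hy.not_ge ((add_Jfun_le_iff hν.2 A M y).1 hle))]
  have integrable_below :
      IntegrableOn (fun y => exp (max (A + Jfun ν y) M) * exp (-y)) (Set.Ioc 0 c) :=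
    Continuous.integrableOn_Ioc (by unfold Jfun; fun_prop)
  have integrable_above :
      IntegrableOn (fun y => exp (max (A + Jfun ν y) M) * exp (-y)) (Set.Ioi c) :=
    (integrableOn_congr_fun above measurableSet_Ioi).2
      (integrableOn_exp_add_Jfun_mul_exp_neg hν.1 A c)
  rw [← Set.Ioc_union_Ioi_eq_Ioi hc0, setIntegral_union (Set.Ioc_disjoint_Ioi le_rfl)
      measurableSet_Ioi integrable_below integrable_above,
    setIntegral_congr_fun measurableSet_Ioc below, integral_const_mul,
    ← intervalIntegral.integral_of_le hc0, setIntegral_congr_fun measurableSet_Ioi above,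
    integral_exp_add_Jfun_mul_exp_neg hν.1]
  simp

lemma exp_mul_one_sub_exp_neg_threshold_add (hν1 : ν < 1) (A M : ℝ) :
    exp M * (1 - exp (-updateThreshold ν A M)) + exp A * exp (-ν * updateThreshold ν A M)
      = exp M + hfun ν * exp ((A - ν * M) / (1 - ν)) := by
  have h1ν : 1 - ν ≠ 0 := by linarith
  have exp_M : exp M * exp (-updateThreshold ν A M)
      = exp (log ν / (1 - ν)) * exp ((A - ν * M) / (1 - ν)) := by
    rw [← exp_add, ← exp_add, updateThreshold]; congr 1; field_simp; ring
  have exp_A : exp A * exp (-ν * updateThreshold ν A M)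
      = exp (ν * log ν / (1 - ν)) * exp ((A - ν * M) / (1 - ν)) := by
    rw [← exp_add, ← exp_add, updateThreshold]; congr 1; field_simp; ring
  rw [hfun, mul_sub, exp_M, exp_A]
  ring

lemma integral_exp_max_add_Jfun_of_le (hν : ν ∈ Set.Ioo 0 1) {A M : ℝ} (h : log ν ≤ M - A) :
    ∫ y in Set.Ioi 0, exp (max (A + Jfun ν y) M) * exp (-y)
      = exp M + hfun ν * exp ((A - ν * M) / (1 - ν)) := by
  have hc0 : 0 ≤ updateThreshold ν A M := div_nonneg (by linarith) (by linarith [hν.2])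
  rw [integral_exp_max_add_Jfun_eq_split hν hc0, exp_mul_one_sub_exp_neg_threshold_add hν.2]

end Update

lemma sup'_add_mul_kdelta (hcard : 2 ≤ Fintype.card ι) (m : ι → ℝ) (a : ι) (t : ℝ) :
    univ.sup' (univ_nonempty_of_card hcard) (fun x => m x + t * kdelta a x)
      = max (m a + t) (maxOther hcard m a) := by
  have h := sup'_insert (s := univ.erase a) (H := erase_nonempty_of_card hcard a)
    (f := fun x => m x + t * kdelta a x) (b := a)
  simp only [insert_erase (mem_univ a)] at h
  rw [h, maxOther]
  congr 1
  · simp [kdelta]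
  · exact sup'_congr _ rfl fun x hx => by simp [kdelta, (mem_erase.1 hx).1]

/-- `∫₀^∞ exp(max_x (m[x] + J(y) δ[a,x])) e^{-y} dy = ξ(a;m)`. -/
theorem integral_max_update_eq_xi
    (ν : ℝ) (hν : ν ∈ Set.Ioo (0:ℝ) 1)
    (hcard : 2 ≤ Fintype.card ι) (m : ι → ℝ) (a : ι) :
    ∫ y in Set.Ioi (0:ℝ),
        Real.exp ((Finset.univ : Finset ι).sup' (univ_nonempty_of_card hcard)
          (fun x => m x + Jfun ν y * kdelta a x)) * Real.exp (-y)
      = xi ν hcard m a := by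
  simp_rw [sup'_add_mul_kdelta hcard m a, xi]
  split_ifs with h
  · exact integral_exp_max_add_Jfun_of_lt hν h
  · exact integral_exp_max_add_Jfun_of_le hν (not_lt.1 h)

end
end

section
/- Let ν ∈ (0,1), let ι be a finite index set with |ι| ≥ 2, and let m : ι → ℝ. Let x₁ be an index maximizing m over ι and x₂ an index maximizing m over ι \ {x₁}. Then ξ(x₂;m) ≥ ξ(a;m) for every a ∈ ι; that is, the second-best index x₂ maximizes a ↦ ξ(a;m) over ι. -/
open Real MeasureTheory Finset

set_option linter.unusedSectionVars false

noncomputable section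

variable {ι : Type*} [Fintype ι] [DecidableEq ι]

/-! ### Auxiliary lemmas for the maximizer claim -/

lemma sinh_convexOn_aux : ConvexOn ℝ (Set.Ici (0:ℝ)) Real.sinh := by
  apply convexOn_of_deriv2_nonneg (convex_Ici 0) Real.continuous_sinh.continuousOn
    Real.differentiable_sinh.differentiableOn
  · rw [Real.deriv_sinh]; exact Real.differentiable_cosh.differentiableOn
  · intro x hx
    have h2 : deriv^[2] Real.sinh = Real.sinh := by
      ext y
      simp [Function.iterate_succ_apply', Real.deriv_sinh, Real.deriv_cosh]
    rw [h2]
    rw [interior_Ici] at hx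
    exact Real.sinh_nonneg_iff.2 (le_of_lt hx)

lemma aux1_sinh {a b : ℝ} (ha : 0 ≤ a) (hab : a ≤ b) : b * Real.sinh a ≤ a * Real.sinh b := by
  rcases eq_or_lt_of_le (ha.trans hab) with hb | hb
  · have ha0 : a = 0 := le_antisymm (hb ▸ hab) ha
    simp [ha0, ← hb]
  · have hc1 : (0:ℝ) ≤ a / b := div_nonneg ha hb.le
    have hc2 : (0:ℝ) ≤ 1 - a / b := by
      rw [sub_nonneg]; exact (div_le_one hb).2 hab
    have hc3 : a / b + (1 - a / b) = 1 := by ring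
    have hcv := sinh_convexOn_aux.2 (Set.mem_Ici.2 hb.le) (Set.mem_Ici.2 (le_refl (0:ℝ)))
      hc1 hc2 hc3
    have ht : (a/b) • b + (1 - a/b) • (0:ℝ) = a := by
      simp [smul_eq_mul]; field_simp
    rw [ht] at hcv
    have hs : Real.sinh a ≤ (a/b) * Real.sinh b := by simpa [smul_eq_mul] using hcv
    calc b * Real.sinh a ≤ b * ((a/b) * Real.sinh b) := mul_le_mul_of_nonneg_left hs hb.le
      _ = a * Real.sinh b := by field_simp

lemma aux2_sinh {k x : ℝ} (hk : 1 ≤ k) (hx : 0 ≤ x) :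
    Real.cosh x * Real.sinh (k*x) ≤ k * (Real.cosh (k*x) * Real.sinh x) := by
  rcases eq_or_lt_of_le hx with h0 | h0
  · simp [← h0]
  · have h := aux1_sinh (a := (k-1)*x) (b := (k+1)*x)
      (mul_nonneg (by linarith) hx) (by nlinarith)
    have e1 : Real.sinh ((k+1)*x)
        = Real.sinh (k*x) * Real.cosh x + Real.cosh (k*x) * Real.sinh x := by
      rw [show (k+1)*x = k*x + x by ring, Real.sinh_add]
    have e2 : Real.sinh ((k-1)*x)
        = Real.sinh (k*x) * Real.cosh x - Real.cosh (k*x) * Real.sinh x := by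
      rw [show (k-1)*x = k*x - x by ring, Real.sinh_sub]
    rw [e1, e2] at h
    have h2 : x * (Real.cosh x * Real.sinh (k*x)) ≤ x * (k * (Real.cosh (k*x) * Real.sinh x)) := by
      nlinarith
    exact le_of_mul_le_mul_left h2 h0

lemma aux3_sinh {k u U : ℝ} (hk : 1 ≤ k) (hu : 0 ≤ u) (huU : u ≤ U) :
    Real.sinh U * Real.sinh (k*u) ≤ Real.sinh u * Real.sinh (k*U) := by
  rcases eq_or_lt_of_le hu with h0 | h0
  · simp [← h0]
  have hD : ∀ x ∈ Set.Ioi (0:ℝ), HasDerivAt (fun y => Real.sinh (k*y) / Real.sinh y)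
      ((Real.cosh (k*x) * k * Real.sinh x - Real.sinh (k*x) * Real.cosh x)
        / (Real.sinh x)^2) x := by
    intro x hx
    have hne : Real.sinh x ≠ 0 := Real.sinh_ne_zero.2 (ne_of_gt hx)
    have h1 : HasDerivAt (fun y : ℝ => Real.sinh (k*y)) (Real.cosh (k*x) * k) x := by
      have hinner : HasDerivAt (fun y : ℝ => k*y) k x := by
        simpa using (hasDerivAt_id x).const_mul k
      exact (Real.hasDerivAt_sinh (k*x)).comp x hinner
    exact h1.div (Real.hasDerivAt_sinh x) hne
  have hmono : MonotoneOn (fun y => Real.sinh (k*y) / Real.sinh y) (Set.Ioi (0:ℝ)) := by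
    have hdiff : DifferentiableOn ℝ (fun y => Real.sinh (k*y) / Real.sinh y) (Set.Ioi (0:ℝ)) :=
      fun x hx => ((hD x hx).differentiableAt).differentiableWithinAt
    apply monotoneOn_of_deriv_nonneg (convex_Ioi 0) hdiff.continuousOn
    · rw [interior_Ioi]; exact hdiff
    · intro x hx
      rw [interior_Ioi] at hx
      rw [(hD x hx).deriv]
      apply div_nonneg _ (sq_nonneg _)
      have := aux2_sinh hk (le_of_lt hx)
      nlinarith
  have h := hmono (Set.mem_Ioi.2 h0) (Set.mem_Ioi.2 (lt_of_lt_of_le h0 huU)) huU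
  have hsu : 0 < Real.sinh u := Real.sinh_pos_iff.2 h0
  have hsU : 0 < Real.sinh U := Real.sinh_pos_iff.2 (lt_of_lt_of_le h0 huU)
  rw [div_le_div_iff₀ hsu hsU] at h
  linarith

lemma main_num_aux {k u U : ℝ} (hk : 1 ≤ k) (hu : 0 ≤ u) (huU : u ≤ U) :
    2 * Real.exp (-(k*U)) * Real.sinh U * Real.sinh (k*u) ≤ Real.sinh u := by
  have h1 := aux3_sinh hk hu huU
  have e1 : Real.exp (-(k*U)) * Real.exp (k*U) = 1 := by
    rw [← Real.exp_add]; simp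
  have h2 : 2 * Real.exp (-(k*U)) * Real.sinh (k*U) ≤ 1 := by
    rw [Real.sinh_eq]
    nlinarith [Real.exp_pos (-(k*U)), Real.exp_pos (k*U), sq_nonneg (Real.exp (-(k*U)))]
  have hE : (0:ℝ) ≤ 2 * Real.exp (-(k*U)) := by positivity
  have hsu : (0:ℝ) ≤ Real.sinh u := Real.sinh_nonneg_iff.2 hu
  have h3 := mul_le_mul_of_nonneg_left h1 hE
  have h4 := mul_le_mul_of_nonneg_left h2 hsu
  nlinarith

lemma key_exchange {ν s t : ℝ} (h0 : 0 < ν) (h1 : ν < 1) (hts : t ≤ s)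
    (hd : Real.log ν ≤ t - s) :
    Real.exp t + hfun ν * Real.exp ((s - ν*t)/(1-ν)) ≤
      Real.exp s + hfun ν * Real.exp ((t - ν*s)/(1-ν)) := by
  have hL : Real.log ν < 0 := Real.log_neg h0 h1
  have h1ν : (0:ℝ) < 1 - ν := by linarith
  set L := Real.log ν with hLdef
  set U : ℝ := -L/2 with hUdef
  set k : ℝ := (1+ν)/(1-ν) with hkdef
  set u : ℝ := (s-t)/2 with hudef
  set M : ℝ := (s+t)/2 with hMdef
  have hk1 : 1 ≤ k := by rw [hkdef, le_div_iff₀ h1ν]; linarith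
  have hu0 : 0 ≤ u := by rw [hudef]; linarith
  have huU : u ≤ U := by rw [hudef, hUdef]; linarith
  have e1 : (s - ν*t)/(1-ν) = M + k*u := by
    rw [hMdef, hkdef, hudef]; field_simp; ring
  have e2 : (t - ν*s)/(1-ν) = M - k*u := by
    rw [hMdef, hkdef, hudef]; field_simp; ring
  have e3 : hfun ν = Real.exp (-(k*U)) * (Real.exp U - Real.exp (-U)) := by
    have ea : ν * L / (1-ν) = -(k*U) + U := by rw [hkdef, hUdef]; field_simp; ring
    have eb : L / (1-ν) = -(k*U) + -U := by rw [hkdef, hUdef]; field_simp; ring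
    rw [hfun, ← hLdef, ea, eb, Real.exp_add, Real.exp_add]; ring
  have hs : s = M + u := by rw [hMdef, hudef]; ring
  have ht : t = M + -u := by rw [hMdef, hudef]; ring
  have main := main_num_aux hk1 hu0 huU
  rw [Real.sinh_eq, Real.sinh_eq, Real.sinh_eq] at main
  have hM := Real.exp_pos M
  have hmain2 := mul_le_mul_of_nonneg_left main hM.le
  rw [e1, e2, e3, hs, ht, show M - k*u = M + -(k*u) by ring,
    Real.exp_add, Real.exp_add, Real.exp_add, Real.exp_add]
  nlinarith [hmain2]

/-- the second-best index `x₂` maximizes `a ↦ ξ(a;m)` over `ι`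
(the maximizer claim of Lemma 2 of the paper). -/
theorem xi_le_xi_secondBest
    (ν : ℝ) (hν : ν ∈ Set.Ioo (0:ℝ) 1)
    (hcard : 2 ≤ Fintype.card ι) (m : ι → ℝ)
    (x₁ x₂ : ι) (hx₁ : ∀ x, m x ≤ m x₁) (hne : x₂ ≠ x₁)
    (hx₂ : ∀ x, x ≠ x₁ → m x ≤ m x₂) :
    ∀ a, xi ν hcard m a ≤ xi ν hcard m x₂ := by
  obtain ⟨hν0, hν1⟩ := hν
  have hL : Real.log ν < 0 := Real.log_neg hν0 hν1
  have h1ν : (0:ℝ) < 1 - ν := by linarith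
  have hh : 0 ≤ hfun ν := by
    rw [hfun, sub_nonneg]
    apply Real.exp_le_exp.2
    have hnum : Real.log ν ≤ ν * Real.log ν := by nlinarith
    gcongr
  have hmax1 : ∀ a : ι, a ≠ x₁ → maxOther hcard m a = m x₁ := by
    intro a ha
    apply le_antisymm
    · exact Finset.sup'_le _ _ fun x _ => hx₁ x
    · exact Finset.le_sup' m (Finset.mem_erase.2 ⟨Ne.symm ha, Finset.mem_univ _⟩)
  have hmax2 : maxOther hcard m x₁ = m x₂ := by
    apply le_antisymm
    · exact Finset.sup'_le _ _ fun x hx => hx₂ x (Finset.mem_erase.1 hx).1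
    · exact Finset.le_sup' m (Finset.mem_erase.2 ⟨hne, Finset.mem_univ _⟩)
  intro a
  by_cases hax : a = x₁
  · subst hax
    simp only [xi]
    rw [hmax2, hmax1 x₂ hne]
    have hge : m x₂ ≤ m a := hx₁ x₂
    have hcx2 : ¬ (m a - m x₂ < Real.log ν) := not_lt.2 (by linarith)
    rw [if_neg hcx2]
    by_cases hcond : m x₂ - m a < Real.log ν
    · rw [if_pos hcond]
      have hp : 0 ≤ hfun ν * Real.exp ((m x₂ - ν * m a) / (1 - ν)) :=
        mul_nonneg hh (Real.exp_pos _).le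
      linarith
    · rw [if_neg hcond]
      exact key_exchange hν0 hν1 hge (not_lt.1 hcond)
  · simp only [xi]
    rw [hmax1 a hax, hmax1 x₂ hne]
    have hcx2 : ¬ (m x₁ - m x₂ < Real.log ν) := not_lt.2 (by linarith [hx₁ x₂])
    have hca : ¬ (m x₁ - m a < Real.log ν) := not_lt.2 (by linarith [hx₁ a])
    rw [if_neg hca, if_neg hcx2]
    have hax2 : m a ≤ m x₂ := hx₂ a hax
    have hexp : Real.exp ((m a - ν * m x₁)/(1-ν)) ≤ Real.exp ((m x₂ - ν * m x₁)/(1-ν)) := by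
      apply Real.exp_le_exp.2
      gcongr
    nlinarith [mul_le_mul_of_nonneg_left hexp hh]


end
end

section
/- Let ν ∈ (0,1), let ι be a finite index set with |ι| ≥ 2, and let m : ι → ℝ. Let x₁ be an index maximizing m over ι and x₂ an index maximizing m over ι \ {x₁}. Then max_{a∈ι} ξ(a;m) = exp(m[x₁]) + h(ν)·exp( (m[x₂] − ν·m[x₁]) / (1−ν) ). -/
open Real MeasureTheory Finset

set_option linter.unusedSectionVars false

noncomputable section

variable {ι : Type*} [Fintype ι] [DecidableEq ι]

/-! For `a ≠ x₁` the largest competitor is `m[x₁]`, so `ξ(a; m)` is increasing in `m[a]` and is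
largest at `a = x₂`, where it equals the right-hand side. For `a = x₁`, put
`s = (m[x₁] - m[x₂]) / (1 - ν)` and `u = -ln ν / (1 - ν)`, so that `h(ν) = e^{-νu} - e^{-u}` and
`0 ≤ s ≤ u` off the trivial branch. Dividing by `e^{m[x₁] + νs}` turns the required bound into
`h(ν) (1 - e^{-(1+ν)s}) ≤ e^{-νs} - e^{-s}`. The difference `ψ(s)` of the two sides vanishes at
`0`, is nonnegative at `u`, and `ψ'(s) = e^{-(1+ν)s} (e^{νs} - ν e^s - (1+ν) h(ν))` with a
decreasing second factor, so `ψ` first increases and then decreases on `[0, u]`. -/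

theorem min_le_of_hasDerivAt_mul_antitoneOn {f w g : ℝ → ℝ} {a b s : ℝ}
    (hf : ∀ x ∈ Set.Icc a b, HasDerivAt f (w x * g x) x) (hw : ∀ x ∈ Set.Icc a b, 0 ≤ w x)
    (hg : AntitoneOn g (Set.Icc a b)) (hs : s ∈ Set.Icc a b) :
    min (f a) (f b) ≤ f s := by
  have hderiv {c d : ℝ} (hcd : Set.Icc c d ⊆ Set.Icc a b) :
      ContinuousOn f (Set.Icc c d) ∧ ∀ x ∈ interior (Set.Icc c d),
        HasDerivWithinAt f (w x * g x) (interior (Set.Icc c d)) x :=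
    ⟨fun x hx => (hf x (hcd hx)).continuousAt.continuousWithinAt,
      fun x hx => (hf x (hcd (interior_subset hx))).hasDerivWithinAt⟩
  rcases le_or_gt 0 (g s) with hgs | hgs
  · have hsub : Set.Icc a s ⊆ Set.Icc a b := Set.Icc_subset_Icc_right hs.2
    have hmono : MonotoneOn f (Set.Icc a s) :=
      monotoneOn_of_hasDerivWithinAt_nonneg (convex_Icc a s) (hderiv hsub).1 (hderiv hsub).2
        fun x hx => by
          rw [interior_Icc] at hx
          have hx' := hsub (Set.Ioo_subset_Icc_self hx)
          exact mul_nonneg (hw x hx') (hgs.trans (hg hx' hs hx.2.le))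
    exact min_le_of_left_le (hmono ⟨le_rfl, hs.1⟩ ⟨hs.1, le_rfl⟩ hs.1)
  · have hsub : Set.Icc s b ⊆ Set.Icc a b := Set.Icc_subset_Icc_left hs.1
    have hanti : AntitoneOn f (Set.Icc s b) :=
      antitoneOn_of_hasDerivWithinAt_nonpos (convex_Icc s b) (hderiv hsub).1 (hderiv hsub).2
        fun x hx => by
          rw [interior_Icc] at hx
          have hx' := hsub (Set.Ioo_subset_Icc_self hx)
          exact mul_nonpos_of_nonneg_of_nonpos (hw x hx') ((hg hs hx' hx.1.le).trans hgs.le)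
    exact min_le_of_right_le (hanti ⟨le_rfl, hs.2⟩ ⟨hs.2, le_rfl⟩ hs.2)

theorem antitoneOn_exp_mul_sub_mul_exp {ν : ℝ} (hν₀ : 0 ≤ ν) (hν₁ : ν ≤ 1) :
    AntitoneOn (fun x => exp (ν * x) - ν * exp x) (Set.Ici 0) := by
  refine antitoneOn_of_hasDerivWithinAt_nonpos (convex_Ici 0) (by fun_prop)
    (f' := fun x => ν * (exp (ν * x) - exp x)) (fun x _ => ?_) (fun x hx => ?_)
  · have h : HasDerivAt (fun x => exp (ν * x) - ν * exp x) (ν * (exp (ν * x) - exp x)) x :=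
      (((hasDerivAt_id x).const_mul ν).exp.sub ((hasDerivAt_exp x).const_mul ν)).congr_deriv
        (by simp only [id, mul_one]; ring)
    exact h.hasDerivWithinAt
  · rw [interior_Ici] at hx
    have : exp (ν * x) ≤ exp x := exp_le_exp.2 (by nlinarith [Set.mem_Ioi.1 hx])
    exact mul_nonpos_of_nonneg_of_nonpos hν₀ (by linarith)

theorem mul_one_sub_exp_le_exp_sub_exp {ν s u : ℝ} (hν₀ : 0 ≤ ν) (hν₁ : ν ≤ 1) (hs : 0 ≤ s)
    (hsu : s ≤ u) :
    (exp (-(ν * u)) - exp (-u)) * (1 - exp (-((1 + ν) * s))) ≤ exp (-(ν * s)) - exp (-s) := by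
  set C := exp (-(ν * u)) - exp (-u)
  have hC : 0 ≤ C := sub_nonneg.2 (exp_le_exp.2 (by nlinarith))
  set ψ : ℝ → ℝ := fun x => exp (-(ν * x)) - exp (-x) - C * (1 - exp (-((1 + ν) * x)))
  have hψ' (x : ℝ) : HasDerivAt ψ
      (exp (-((1 + ν) * x)) * (exp (ν * x) - ν * exp x - (1 + ν) * C)) x := by
    have e₁ : exp (-(ν * x)) = exp (-((1 + ν) * x)) * exp x := by rw [← exp_add]; ring_nf
    have e₂ : exp (-x) = exp (-((1 + ν) * x)) * exp (ν * x) := by rw [← exp_add]; ring_nf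
    refine ((((hasDerivAt_id x).const_mul ν).neg.exp.sub (hasDerivAt_id x).neg.exp).sub
      ((((hasDerivAt_id x).const_mul (1 + ν)).neg.exp.const_sub 1).const_mul C)).congr_deriv ?_
    simp only [Pi.neg_apply, id, mul_one]
    rw [e₁, e₂]
    ring
  have hψ₀ : ψ 0 = 0 := by simp [ψ]
  have hψu : ψ u = C * exp (-((1 + ν) * u)) := by simp only [ψ, C]; ring
  have hmin := min_le_of_hasDerivAt_mul_antitoneOn (fun x _ => hψ' x) (fun x _ => (exp_pos _).le)
    (g := fun x => exp (ν * x) - ν * exp x - (1 + ν) * C)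
    (fun x hx y hy hxy => sub_le_sub_right
      (antitoneOn_exp_mul_sub_mul_exp hν₀ hν₁ hx.1 hy.1 hxy) _) ⟨hs, hsu⟩
  rw [hψ₀, hψu, min_eq_left (mul_nonneg hC (exp_pos _).le)] at hmin
  simp only [ψ] at hmin
  linarith

theorem hfun_eq_exp_sub_exp (ν : ℝ) :
    hfun ν = exp (-(ν * (-log ν / (1 - ν)))) - exp (-(-log ν / (1 - ν))) := by
  unfold hfun
  ring_nf

theorem hfun_nonneg {ν : ℝ} (hν₀ : 0 ≤ ν) (hν₁ : ν < 1) : 0 ≤ hfun ν := by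
  have hu : 0 ≤ -log ν / (1 - ν) :=
    div_nonneg (neg_nonneg.2 (log_nonpos hν₀ hν₁.le)) (sub_nonneg.2 hν₁.le)
  rw [hfun_eq_exp_sub_exp]
  exact sub_nonneg.2 (exp_le_exp.2 (by nlinarith))

theorem exp_add_hfun_mul_exp_le {ν m₁ m₂ : ℝ} (hν₀ : 0 ≤ ν) (hν₁ : ν < 1) (h₂₁ : m₂ ≤ m₁)
    (hlog : log ν ≤ m₂ - m₁) :
    exp m₂ + hfun ν * exp ((m₁ - ν * m₂) / (1 - ν))
      ≤ exp m₁ + hfun ν * exp ((m₂ - ν * m₁) / (1 - ν)) := by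
  have hν : 0 < 1 - ν := sub_pos.2 hν₁
  set s := (m₁ - m₂) / (1 - ν)
  set t := (m₁ - ν * m₂) / (1 - ν)
  have key := mul_one_sub_exp_le_exp_sub_exp hν₀ hν₁.le (s := s) (u := -log ν / (1 - ν))
    (div_nonneg (by linarith) hν.le) (div_le_div_of_nonneg_right (by linarith) hν.le)
  rw [← hfun_eq_exp_sub_exp] at key
  have e₁ : exp m₁ = exp (-(ν * s)) * exp t := by
    rw [← exp_add]; congr 1; simp only [s, t]; field_simp; ring
  have e₂ : exp m₂ = exp (-s) * exp t := by
    rw [← exp_add]; congr 1; simp only [s, t]; field_simp; ring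
  have e₃ : exp ((m₂ - ν * m₁) / (1 - ν)) = exp (-((1 + ν) * s)) * exp t := by
    rw [← exp_add]; congr 1; simp only [s, t]; field_simp; ring
  rw [e₁, e₂, e₃]
  linarith [mul_le_mul_of_nonneg_right key (exp_pos t).le]

theorem maxOther_eq {hcard : 2 ≤ Fintype.card ι} {m : ι → ℝ} {a b : ι} (hba : b ≠ a)
    (hb : ∀ x, x ≠ a → m x ≤ m b) : maxOther hcard m a = m b :=
  le_antisymm (Finset.sup'_le _ _ fun x hx => hb x (Finset.ne_of_mem_erase hx))
    (Finset.le_sup' m (Finset.mem_erase.2 ⟨hba, Finset.mem_univ b⟩))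

theorem xi_of_ne_of_isMax {ν : ℝ} (hν : ν ∈ Set.Ioo (0 : ℝ) 1) (hcard : 2 ≤ Fintype.card ι)
    {m : ι → ℝ} {a x₁ : ι} (hx₁ : ∀ x, m x ≤ m x₁) (ha : a ≠ x₁) :
    xi ν hcard m a = exp (m x₁) + hfun ν * exp ((m a - ν * m x₁) / (1 - ν)) := by
  have hlog : log ν < 0 := log_neg hν.1 hν.2
  rw [xi, maxOther_eq ha.symm fun x _ => hx₁ x, if_neg (by linarith [hx₁ a])]

theorem xi_le_of_isMax {ν : ℝ} (hν : ν ∈ Set.Ioo (0 : ℝ) 1) (hcard : 2 ≤ Fintype.card ι)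
    {m : ι → ℝ} {x₁ x₂ : ι} (hx₁ : ∀ x, m x ≤ m x₁) (hne : x₂ ≠ x₁)
    (hx₂ : ∀ x, x ≠ x₁ → m x ≤ m x₂) :
    xi ν hcard m x₁ ≤ exp (m x₁) + hfun ν * exp ((m x₂ - ν * m x₁) / (1 - ν)) := by
  rw [xi, maxOther_eq hne hx₂]
  split_ifs with h
  · exact le_add_of_nonneg_right (mul_nonneg (hfun_nonneg hν.1.le hν.2) (exp_pos _).le)
  · exact exp_add_hfun_mul_exp_le hν.1.le hν.2 (hx₁ x₂) (not_lt.1 h)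

/-- `max_a ξ(a;m) = exp(m[x₁]) + h(ν) exp((m[x₂] - ν m[x₁])/(1-ν))`
(the value claim of Lemma 2 of the paper). -/
theorem max_xi_eq
    (ν : ℝ) (hν : ν ∈ Set.Ioo (0:ℝ) 1)
    (hcard : 2 ≤ Fintype.card ι) (m : ι → ℝ)
    (x₁ x₂ : ι) (hx₁ : ∀ x, m x ≤ m x₁) (hne : x₂ ≠ x₁)
    (hx₂ : ∀ x, x ≠ x₁ → m x ≤ m x₂) :
    (Finset.univ : Finset ι).sup' (univ_nonempty_of_card hcard) (xi ν hcard m)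
      = Real.exp (m x₁) + hfun ν * Real.exp ((m x₂ - ν * m x₁) / (1 - ν)) := by
  refine le_antisymm (Finset.sup'_le _ _ fun a _ => ?_) ?_
  · obtain rfl | ha := eq_or_ne a x₁
    · exact xi_le_of_isMax hν hcard hx₁ hne hx₂
    · have hh := hfun_nonneg hν.1.le hν.2
      have hν' : 0 < 1 - ν := sub_pos.2 hν.2
      rw [xi_of_ne_of_isMax hν hcard hx₁ ha]
      gcongr
      exact hx₂ a ha
  · rw [← xi_of_ne_of_isMax hν hcard hx₁ hne]
    exact Finset.le_sup' _ (Finset.mem_univ x₂)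

end
end

section
/- Fix ν ∈ (0,1) and define u(Δ) = (exp(Δ) − 1)/( exp(Δ/(1−ν)) − exp(−ν·Δ/(1−ν)) ) − h(ν). Then u is decreasing in Δ on the interval (0, −ln ν]. -/
open Real MeasureTheory Finset

set_option linter.unusedSectionVars false

noncomputable section

variable {ι : Type*} [Fintype ι] [DecidableEq ι]

/-! Substituting the identity `exp x - exp y = 2 exp ((x + y) / 2) sinh ((x - y) / 2)` in numerator
and denominator and cancelling the common factor `2 exp (Δ / 2)` turns `u + h(ν)` into
`sinh (Δ / 2) / sinh (b Δ)` with `b = (1 + ν) / (2 (1 - ν)) > 1 / 2`. For `0 < a < b` the ratio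
`sinh (a t) / sinh (b t)` decreases on `t > 0`: the numerator of its derivative has the sign of
`a cosh (a t) sinh (b t) - b sinh (a t) cosh (b t)`, which vanishes at `0` and has derivative
`(a² - b²) sinh (a t) sinh (b t) < 0`. -/

theorem exp_sub_exp_eq_two_mul_exp_mul_sinh (x y : ℝ) :
    exp x - exp y = 2 * exp ((x + y) / 2) * sinh ((x - y) / 2) := by
  calc exp x - exp y = exp ((x + y) / 2 + (x - y) / 2) - exp ((x + y) / 2 + -((x - y) / 2)) := by
        ring_nf
    _ = 2 * exp ((x + y) / 2) * sinh ((x - y) / 2) := by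
        rw [exp_add, exp_add, sinh_eq]
        ring

theorem mul_cosh_mul_mul_sinh_mul_lt {a b t : ℝ} (ha : 0 < a) (hab : a < b) (ht : 0 < t) :
    a * cosh (a * t) * sinh (b * t) < b * sinh (a * t) * cosh (b * t) := by
  let φ : ℝ → ℝ := fun t => b * sinh (a * t) * cosh (b * t) - a * cosh (a * t) * sinh (b * t)
  have hφ (t : ℝ) : HasDerivAt φ ((b ^ 2 - a ^ 2) * sinh (a * t) * sinh (b * t)) t := by
    have hsa := ((hasDerivAt_id' t).const_mul a).sinh
    have hcb := ((hasDerivAt_id' t).const_mul b).cosh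
    have hca := ((hasDerivAt_id' t).const_mul a).cosh
    have hsb := ((hasDerivAt_id' t).const_mul b).sinh
    exact (((hsa.const_mul b).mul hcb).sub ((hca.const_mul a).mul hsb)).congr_deriv (by ring)
  have hφ_mono : StrictMonoOn φ (Set.Ici 0) := by
    refine strictMonoOn_of_deriv_pos (convex_Ici 0)
      (fun t _ => (hφ t).continuousAt.continuousWithinAt) fun s hs => ?_
    rw [interior_Ici, Set.mem_Ioi] at hs
    rw [(hφ s).deriv]
    have : 0 < b ^ 2 - a ^ 2 := by nlinarith
    have := sinh_pos_iff.2 (mul_pos ha hs)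
    have := sinh_pos_iff.2 (mul_pos (ha.trans hab) hs)
    positivity
  have := hφ_mono (Set.mem_Ici.2 le_rfl) ht.le ht
  simp only [φ, mul_zero, sinh_zero, cosh_zero] at this
  linarith

theorem strictAntiOn_sinh_mul_div_sinh_mul {a b : ℝ} (ha : 0 < a) (hab : a < b) :
    StrictAntiOn (fun t => sinh (a * t) / sinh (b * t)) (Set.Ioi 0) := by
  have hsinh_pos {t : ℝ} (ht : 0 < t) : 0 < sinh (b * t) :=
    sinh_pos_iff.2 (mul_pos (ha.trans hab) ht)
  refine strictAntiOn_of_deriv_neg (convex_Ioi 0)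
    (ContinuousOn.div (by fun_prop) (by fun_prop) fun t ht => (hsinh_pos ht).ne') fun t ht => ?_
  rw [interior_Ioi, Set.mem_Ioi] at ht
  have hsa := ((hasDerivAt_id' t).const_mul a).sinh
  have hsb := ((hasDerivAt_id' t).const_mul b).sinh
  rw [(hsa.fun_div hsb (hsinh_pos ht).ne').deriv]
  refine div_neg_of_neg_of_pos ?_ (pow_pos (hsinh_pos ht) 2)
  linarith [mul_cosh_mul_mul_sinh_mul_lt ha hab ht]

theorem exp_sub_one_div_exp_sub_exp_eq_sinh_div_sinh {ν : ℝ} (hν : ν ≠ 1) (Δ : ℝ) :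
    (exp Δ - 1) / (exp (Δ / (1 - ν)) - exp (-ν * Δ / (1 - ν))) =
      sinh (1 / 2 * Δ) / sinh ((1 + ν) / (2 * (1 - ν)) * Δ) := by
  have h1ν : 1 - ν ≠ 0 := sub_ne_zero.2 hν.symm
  have hnum : exp Δ - 1 = 2 * exp (Δ / 2) * sinh (1 / 2 * Δ) := by
    calc exp Δ - 1 = exp Δ - exp 0 := by rw [exp_zero]
      _ = _ := by rw [exp_sub_exp_eq_two_mul_exp_mul_sinh]; ring_nf
  have hden : exp (Δ / (1 - ν)) - exp (-ν * Δ / (1 - ν)) =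
      2 * exp (Δ / 2) * sinh ((1 + ν) / (2 * (1 - ν)) * Δ) := by
    rw [exp_sub_exp_eq_two_mul_exp_mul_sinh]
    congr 3 <;> field_simp <;> ring
  rw [hnum, hden, mul_div_mul_left _ _ (by positivity)]

/-- `u(Δ) = (e^Δ - 1)/(e^{Δ/(1-ν)} - e^{-νΔ/(1-ν)}) - h(ν)` is decreasing
in `Δ` on `(0, -ln ν]`. -/
theorem u_strictAntiOn (ν : ℝ) (hν : ν ∈ Set.Ioo (0:ℝ) 1) :
    StrictAntiOn
      (fun Δ : ℝ =>
        (Real.exp Δ - 1) / (Real.exp (Δ / (1 - ν)) - Real.exp (-ν * Δ / (1 - ν))) - hfun ν)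
      (Set.Ioc 0 (-Real.log ν)) := by
  obtain ⟨hν0, hν1⟩ := hν
  have hab : 1 / 2 < (1 + ν) / (2 * (1 - ν)) := by
    rw [lt_div_iff₀ (by linarith)]
    linarith
  intro x hx y hy hxy
  simp only [sub_lt_sub_iff_right, exp_sub_one_div_exp_sub_exp_eq_sinh_div_sinh hν1.ne]
  exact strictAntiOn_sinh_mul_div_sinh_mul one_half_pos hab hx.1 hy.1 hxy

end
end

section
/- Let ν ∈ (0,1), let ι be a finite index set with |ι| ≥ 2, and let m : ι → ℝ. Then max_{a∈ι} ξ(a;m) ≤ (1 + h(ν)) · exp( max_{x∈ι} m[x] ). -/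
open Real MeasureTheory Finset

set_option linter.unusedSectionVars false

noncomputable section

variable {ι : Type*} [Fintype ι] [DecidableEq ι]

lemma hfun_nonneg_s12 {ν : ℝ} (hν0 : 0 < ν) (hν1 : ν < 1) : 0 ≤ hfun ν := by
  unfold hfun
  have hlog : Real.log ν ≤ 0 := Real.log_nonpos hν0.le (by linarith)
  have : Real.log ν / (1 - ν) ≤ ν * Real.log ν / (1 - ν) := by
    apply div_le_div_of_nonneg_right ?_ (by linarith) |>.trans_eq rfl
    nlinarith
  linarith [Real.exp_le_exp.2 this]

lemma keyw {ν : ℝ} (hν0 : 0 < ν) (hν1 : ν < 1) {w : ℝ}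
    (hw1 : Real.exp (Real.log ν / (1 - ν)) ≤ w) (hw2 : w ≤ 1) :
    w + hfun ν ≤ (1 + hfun ν) * w ^ ν := by
  set u := Real.exp (Real.log ν / (1 - ν)) with hu
  set v := Real.exp (ν * Real.log ν / (1 - ν)) with hv
  have hh : hfun ν = v - u := rfl
  have hnuv : ν * v = u := by
    have h1ν : (1:ℝ) - ν ≠ 0 := by linarith
    have hexp : Real.log ν + ν * Real.log ν / (1 - ν) = Real.log ν / (1 - ν) := by
      field_simp; ring
    calc ν * v = Real.exp (Real.log ν) * Real.exp (ν * Real.log ν / (1 - ν)) := by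
          rw [Real.exp_log hν0, hv]
      _ = u := by rw [← Real.exp_add, hexp, hu]
  have hupos : 0 < u := Real.exp_pos _
  have hvpos : 0 < v := Real.exp_pos _
  have huv : u ≤ v := by nlinarith
  have hhnn : 0 ≤ hfun ν := by rw [hh]; linarith
  -- concave function ψ
  set ψ : ℝ → ℝ := fun w => (1 + hfun ν) * w ^ ν - (w + hfun ν) with hψ
  have hconc : ConcaveOn ℝ (Set.Ici 0) ψ := by
    have h1 : ConcaveOn ℝ (Set.Ici 0) fun w : ℝ => (1 + hfun ν) * w ^ ν := by
      have := Real.concaveOn_rpow hν0.le hν1.le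
      exact this.smul (by linarith)
    have h2 : ConvexOn ℝ (Set.Ici 0) fun w : ℝ => w + hfun ν :=
      (convexOn_id (convex_Ici 0)).add (convexOn_const _ (convex_Ici 0))
    exact h1.sub h2
  have hψu : ψ u = hfun ν * v := by
    have huν : u ^ ν = v := by
      rw [hu, ← Real.exp_mul, hv]; ring_nf
    simp only [hψ, huν, hh]; ring
  have hψ1 : ψ 1 = 0 := by
    simp [hψ, Real.one_rpow]
  have hseg : w ∈ segment ℝ u (1:ℝ) := by
    rw [segment_eq_Icc (by linarith)]
    exact ⟨hw1, hw2⟩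
  have := hconc.ge_on_segment (x := u) (y := 1) (z := w)
    (Set.mem_Ici.2 hupos.le) (Set.mem_Ici.2 zero_le_one) hseg
  rw [hψu, hψ1] at this
  have hmin : (0:ℝ) ≤ min (hfun ν * v) 0 := le_min (by positivity) le_rfl
  have : 0 ≤ ψ w := le_trans hmin this
  simp only [hψ] at this
  linarith

lemma keys {ν : ℝ} (hν0 : 0 < ν) (hν1 : ν < 1) {s : ℝ}
    (hs1 : Real.log ν ≤ s) (hs2 : s ≤ 0) :
    Real.exp s + hfun ν * Real.exp (-ν * s / (1 - ν)) ≤ 1 + hfun ν := by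
  set w := Real.exp (s / (1 - ν)) with hw
  have h1ν : (0:ℝ) < 1 - ν := by linarith
  have hw1 : Real.exp (Real.log ν / (1 - ν)) ≤ w :=
    Real.exp_le_exp.2 (by gcongr)
  have hw2 : w ≤ 1 := Real.exp_le_one_iff.2 (div_nonpos_of_nonpos_of_nonneg hs2 h1ν.le)
  have key := keyw hν0 hν1 hw1 hw2
  have hwν : w ^ ν = Real.exp (ν * s / (1 - ν)) := by
    rw [hw, ← Real.exp_mul]; ring_nf
  rw [hwν] at key
  have hpos : 0 < Real.exp (-ν * s / (1 - ν)) := Real.exp_pos _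
  have := mul_le_mul_of_nonneg_right key hpos.le
  calc Real.exp s + hfun ν * Real.exp (-ν * s / (1 - ν))
      = (Real.exp (s / (1 - ν)) + hfun ν) * Real.exp (-ν * s / (1 - ν)) := by
        rw [add_mul, ← Real.exp_add]
        congr 2
        field_simp
        ring
    _ ≤ (1 + hfun ν) * Real.exp (ν * s / (1 - ν)) * Real.exp (-ν * s / (1 - ν)) := this
    _ = 1 + hfun ν := by
        rw [mul_assoc, ← Real.exp_add,
          show ν * s / (1 - ν) + -ν * s / (1 - ν) = 0 by ring, Real.exp_zero, mul_one]

/-- `max_a ξ(a;m) ≤ (1 + h(ν)) exp(max_x m[x])`. -/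
theorem max_xi_ub
    (ν : ℝ) (hν : ν ∈ Set.Ioo (0:ℝ) 1)
    (hcard : 2 ≤ Fintype.card ι) (m : ι → ℝ) :
    (Finset.univ : Finset ι).sup' (univ_nonempty_of_card hcard) (xi ν hcard m)
      ≤ (1 + hfun ν) *
          Real.exp ((Finset.univ : Finset ι).sup' (univ_nonempty_of_card hcard) m) := by
  obtain ⟨hν0, hν1⟩ := hν
  set M := (Finset.univ : Finset ι).sup' (univ_nonempty_of_card hcard) m with hM
  have hhnn : 0 ≤ hfun ν := hfun_nonneg_s12 hν0 hν1
  have h1ν : (0:ℝ) < 1 - ν := by linarith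
  apply Finset.sup'_le
  intro a _
  have hma : m a ≤ M := Finset.le_sup' m (Finset.mem_univ a)
  have hmo : maxOther hcard m a ≤ M := by
    apply Finset.sup'_le
    intro b _
    exact Finset.le_sup' m (Finset.mem_univ b)
  unfold xi
  split_ifs with hcase
  · calc Real.exp (m a) ≤ Real.exp M := Real.exp_le_exp.2 hma
      _ ≤ (1 + hfun ν) * Real.exp M := by nlinarith [Real.exp_pos M]
  · push_neg at hcase
    set x := maxOther hcard m a with hx
    by_cases hle : m a ≤ x
    · have hdiv : (m a - ν * x) / (1 - ν) ≤ M := by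
        rw [div_le_iff₀ h1ν]; nlinarith
      calc Real.exp x + hfun ν * Real.exp ((m a - ν * x) / (1 - ν))
          ≤ Real.exp M + hfun ν * Real.exp M :=
            add_le_add (Real.exp_le_exp.2 hmo)
              (mul_le_mul_of_nonneg_left (Real.exp_le_exp.2 hdiv) hhnn)
        _ = (1 + hfun ν) * Real.exp M := by ring
    · push_neg at hle
      set s := x - m a with hs
      have hs1 : Real.log ν ≤ s := hcase
      have hs2 : s ≤ 0 := by linarith
      have key := keys hν0 hν1 hs1 hs2
      have e1 : Real.exp x = Real.exp (m a) * Real.exp s := by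
        rw [← Real.exp_add]; congr 1; rw [hs]; ring
      have e2 : Real.exp ((m a - ν * x) / (1 - ν))
          = Real.exp (m a) * Real.exp (-ν * s / (1 - ν)) := by
        rw [← Real.exp_add]; congr 1
        rw [hs]; field_simp; ring
      calc Real.exp x + hfun ν * Real.exp ((m a - ν * x) / (1 - ν))
          = Real.exp (m a) * (Real.exp s + hfun ν * Real.exp (-ν * s / (1 - ν))) := by
            rw [e1, e2]; ring
        _ ≤ Real.exp (m a) * (1 + hfun ν) :=
            mul_le_mul_of_nonneg_left key (Real.exp_pos _).le
        _ = (1 + hfun ν) * Real.exp (m a) := by ring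
        _ ≤ (1 + hfun ν) * Real.exp M := by
            apply mul_le_mul_of_nonneg_left (Real.exp_le_exp.2 hma) (by linarith)

end
end

section
/- Let ν ∈ (0,1), let ι be a finite index set with |ι| ≥ 2, and let m : ι → ℝ. Then max_{a∈ι} ξ(a;m) ≥ exp( max_{x∈ι} m[x] ) + h(ν) · exp( ( min over ordered pairs of distinct indices (x_i,x_j) of ( m[x_i] − ν·m[x_j] ) ) / (1−ν) ). -/
open Real MeasureTheory Finset

set_option linter.unusedSectionVars false

noncomputable section

variable {ι : Type*} [Fintype ι] [DecidableEq ι]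

/-- `max_a ξ(a;m) ≥ exp(max_x m[x]) + h(ν) exp(min_{x_i ≠ x_j}(m[x_i] - ν m[x_j])/(1-ν))`. -/
theorem max_xi_lb
    (ν : ℝ) (hν : ν ∈ Set.Ioo (0:ℝ) 1)
    (hcard : 2 ≤ Fintype.card ι) (m : ι → ℝ) :
    (Finset.univ : Finset ι).sup' (univ_nonempty_of_card hcard) (xi ν hcard m)
      ≥ Real.exp ((Finset.univ : Finset ι).sup' (univ_nonempty_of_card hcard) m)
        + hfun ν * Real.exp (minPair ν hcard m / (1 - ν)) := by
  obtain ⟨hν0, hν1⟩ := hν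
  have hlogν : Real.log ν < 0 := Real.log_neg hν0 hν1
  have h1ν : (0:ℝ) < 1 - ν := by linarith
  -- argmax a
  obtain ⟨a, -, hmax⟩ := Finset.exists_max_image (Finset.univ : Finset ι) m
    (univ_nonempty_of_card hcard)
  have hsupm : (Finset.univ : Finset ι).sup' (univ_nonempty_of_card hcard) m = m a :=
    le_antisymm (Finset.sup'_le _ _ fun x hx => hmax x hx)
      (Finset.le_sup' _ (Finset.mem_univ a))
  -- b ≠ a
  obtain ⟨b, hb⟩ := Fintype.exists_ne_of_one_lt_card (by omega) a
  -- maxOther at b equals m a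
  have hmo : maxOther hcard m b = m a := by
    refine le_antisymm (Finset.sup'_le _ _ fun x hx => hmax x (Finset.mem_univ x)) ?_
    exact Finset.le_sup' m (Finset.mem_erase.2 ⟨(Ne.symm hb), Finset.mem_univ a⟩)
  -- ξ(b) is the else branch
  have hxib : xi ν hcard m b
      = Real.exp (m a) + hfun ν * Real.exp ((m b - ν * m a) / (1 - ν)) := by
    have hcond : ¬ (maxOther hcard m b - m b < Real.log ν) := by
      rw [hmo]
      have := hmax b (Finset.mem_univ b)
      push_neg
      linarith
    rw [xi, if_neg hcond, hmo]
  -- hfun ν ≥ 0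
  have hh : 0 ≤ hfun ν := by
    rw [hfun, sub_nonneg]
    apply Real.exp_le_exp.2
    have : ν * Real.log ν - Real.log ν = (ν - 1) * Real.log ν := by ring
    have h2 : Real.log ν ≤ ν * Real.log ν := by nlinarith
    exact div_le_div_of_nonneg_right h2 h1ν.le
  -- minPair ≤ m b - ν * m a
  have hmin : minPair ν hcard m ≤ m b - ν * m a := by
    rw [minPair]
    exact Finset.inf'_le (fun p : ι × ι => m p.1 - ν * m p.2)
      (show ((b,a) : ι × ι) ∈ _ from by simp [hb])
  have hexp : Real.exp (minPair ν hcard m / (1 - ν))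
      ≤ Real.exp ((m b - ν * m a) / (1 - ν)) :=
    Real.exp_le_exp.2 (div_le_div_of_nonneg_right hmin h1ν.le)
  calc Real.exp ((Finset.univ : Finset ι).sup' (univ_nonempty_of_card hcard) m)
        + hfun ν * Real.exp (minPair ν hcard m / (1 - ν))
      ≤ Real.exp (m a) + hfun ν * Real.exp ((m b - ν * m a) / (1 - ν)) := by
        rw [hsupm]
        have := mul_le_mul_of_nonneg_left hexp hh
        linarith
    _ = xi ν hcard m b := hxib.symm
    _ ≤ (Finset.univ : Finset ι).sup' (univ_nonempty_of_card hcard) (xi ν hcard m) :=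
        Finset.le_sup' _ (Finset.mem_univ b)

end
end

section
/- Let ν ∈ (0,1), let ι be a finite index set with |ι| ≥ 2, let m : ι → ℝ and a ∈ ι. Define the terminal value V_L(m) = max_{x∈ι} exp(m[x]) / Σ_{l∈ι} exp(m[l]). Then the one-step Q-value satisfies ∫₀^∞ V_L( m + J(y)·δ_a ) · f(y|m,a) dy = ξ(a;m) / Σ_{l∈ι} exp(m[l]), where δ_a : ι → ℝ is the 0/1 indicator vector of index a. -/
open Real MeasureTheory Finset

set_option linter.unusedSectionVars false

noncomputable section

variable {ι : Type*} [Fintype ι] [DecidableEq ι]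

/-! After the update only the `a`-th weight changes, to `ν e^{(1-ν)y} e^{m a}`, while the
density is `e^{-y}` times the updated normaliser divided by the old one. The normalisers cancel,
and the integrand becomes `max (ν e^{m a - ν y}) (e^{M - y}) / ∑ l, e^{m l}` with
`M = max_{â ≠ a} m â`. The two exponentials cross once, at `c = (M - m a - ln ν) / (1 - ν)`.
If `c < 0` the first one dominates on `(0, ∞)` and the integral is `e^{m a}`; otherwise splitting
at `c` gives `e^M - e^{M - c} + e^{m a - ν c}`, which is `ξ(a; m)`. -/

open Set

lemma integrableOn_exp_sub_mul_Ioi {k : ℝ} (hk : 0 < k) (p b : ℝ) :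
    IntegrableOn (fun y => exp (p - k * y)) (Ioi b) := by
  refine IntegrableOn.congr_fun ((exp_neg_integrableOn_Ioi b hk).const_mul (exp p))
    (fun y _ => ?_) measurableSet_Ioi
  rw [← exp_add, neg_mul, ← sub_eq_add_neg]

lemma integral_exp_sub_mul_Ioi {k : ℝ} (hk : 0 < k) (p b : ℝ) :
    ∫ y in Ioi b, exp (p - k * y) = exp (p - k * b) / k := by
  simp_rw [sub_eq_add_neg, exp_add, integral_const_mul, ← neg_mul,
    integral_exp_mul_Ioi (neg_lt_zero.2 hk)]
  field_simp

lemma integral_Ioi_max_of_crossing {F G : ℝ → ℝ} {c : ℝ} (hc : 0 ≤ c)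
    (hF : IntegrableOn F (Ioi 0)) (hG : IntegrableOn G (Ioi 0))
    (hFG : ∀ y ∈ Ioc 0 c, F y ≤ G y) (hGF : ∀ y ∈ Ioi c, G y ≤ F y) :
    ∫ y in Ioi 0, max (F y) (G y)
      = (∫ y in Ioi 0, G y) - (∫ y in Ioi c, G y) + ∫ y in Ioi c, F y := by
  have hmax : IntegrableOn (fun y => max (F y) (G y)) (Ioi 0) := hF.sup hG
  rw [← intervalIntegral.integral_interval_add_Ioi hmax (hmax.mono_set (Ioi_subset_Ioi hc)),
    intervalIntegral.integral_Ioi_sub_Ioi hG hc, intervalIntegral.integral_of_le hc,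
    intervalIntegral.integral_of_le hc,
    setIntegral_congr_fun measurableSet_Ioc fun y hy => max_eq_right (hFG y hy),
    setIntegral_congr_fun measurableSet_Ioi fun y hy => max_eq_left (hGF y hy)]

section Crossing

variable {ν : ℝ} (hν : ν ∈ Ioo (0 : ℝ) 1) (p q : ℝ)
include hν

lemma mul_exp_le_exp_iff (y : ℝ) :
    ν * exp (p - ν * y) ≤ exp (q - y) ↔ y ≤ (q - p - log ν) / (1 - ν) := by
  rw [le_div_iff₀ (sub_pos.2 hν.2), ← exp_log hν.1, ← exp_add, exp_le_exp, exp_log hν.1]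
  constructor <;> intro h <;> linarith

lemma integral_Ioi_max_mul_exp_exp :
    ∫ y in Ioi 0, max (ν * exp (p - ν * y)) (exp (q - y))
      = if q - p < log ν then exp p
        else exp q + hfun ν * exp ((p - ν * q) / (1 - ν)) := by
  have hF := (integrableOn_exp_sub_mul_Ioi hν.1 p 0).const_mul ν
  have hG : IntegrableOn (fun y => exp (q - y)) (Ioi 0) := by
    simpa using integrableOn_exp_sub_mul_Ioi one_pos q 0
  have hGint (b : ℝ) : ∫ y in Ioi b, exp (q - y) = exp (q - b) := by
    simpa using integral_exp_sub_mul_Ioi one_pos q b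
  have hFint (b : ℝ) : ∫ y in Ioi b, ν * exp (p - ν * y) = exp (p - ν * b) := by
    rw [integral_const_mul, integral_exp_sub_mul_Ioi hν.1]
    field_simp [hν.1.ne']
  set c := (q - p - log ν) / (1 - ν) with hc
  have hFG : ∀ y ∈ Ioc 0 c, ν * exp (p - ν * y) ≤ exp (q - y) :=
    fun y hy => (mul_exp_le_exp_iff hν p q y).2 hy.2
  have hGF (b : ℝ) (hb : c ≤ b) : ∀ y ∈ Ioi b, exp (q - y) ≤ ν * exp (p - ν * y) :=
    fun y hy => (not_le.1 fun h =>
      (hb.trans_lt hy).not_ge ((mul_exp_le_exp_iff hν p q y).1 h)).le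
  split_ifs with hlt
  · have hc0 : c ≤ 0 := div_nonpos_of_nonpos_of_nonneg (by linarith) (sub_pos.2 hν.2).le
    rw [integral_Ioi_max_of_crossing le_rfl hF hG (by simp) (hGF 0 hc0), hFint]
    simp
  · have hc0 : 0 ≤ c := div_nonneg (by linarith) (sub_pos.2 hν.2).le
    rw [integral_Ioi_max_of_crossing hc0 hF hG hFG (hGF c le_rfl), hGint, hGint, hFint, hfun,
      sub_zero, sub_mul, ← exp_add, ← exp_add]
    have h1ν : 1 - ν ≠ 0 := (sub_pos.2 hν.2).ne'
    have hq : q - c = log ν / (1 - ν) + (p - ν * q) / (1 - ν) := by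
      rw [hc]; field_simp; ring
    have hp : p - ν * c = ν * log ν / (1 - ν) + (p - ν * q) / (1 - ν) := by
      rw [hc]; field_simp; ring
    rw [hq, hp]
    ring

end Crossing

lemma add_mul_kdelta_eq_update (m : ι → ℝ) (a : ι) (t : ℝ) :
    (fun x => m x + t * kdelta a x) = Function.update m a (m a + t) := by
  funext x
  by_cases hx : x = a
  · subst hx; simp [kdelta]
  · simp [kdelta, hx]

lemma Finset.sup'_update_eq_max {β α : Type*} [DecidableEq β] [LinearOrder α] {s : Finset β}
    {a : β} (ha : a ∈ s) (hs : (s.erase a).Nonempty) (f : β → α) (v : α) :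
    s.sup' (hs.mono (s.erase_subset a)) (Function.update f a v)
      = max v ((s.erase a).sup' hs f) := by
  rw [Finset.sup'_congr (hs.mono (s.erase_subset a)) (Finset.insert_erase ha).symm
      fun _ _ => rfl, Finset.sup'_insert (H := hs), Function.update_self]
  congr 1
  exact Finset.sup'_congr _ rfl fun x hx => Function.update_of_ne (Finset.ne_of_mem_erase hx) _ _

lemma sum_exp_update (m : ι → ℝ) (a : ι) (v : ℝ) :
    ∑ l, exp (Function.update m a v l) = ∑ l, exp (m l) - exp (m a) + exp v := by
  rw [← Finset.add_sum_erase _ _ (Finset.mem_univ a),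
    ← Finset.add_sum_erase _ _ (Finset.mem_univ a), Function.update_self,
    Finset.sum_congr rfl fun x hx => by rw [Function.update_of_ne (Finset.ne_of_mem_erase hx)]]
  ring

lemma Vterm_update (hcard : 2 ≤ Fintype.card ι) (m : ι → ℝ) (a : ι) (v : ℝ) :
    Vterm hcard (Function.update m a v)
      = max (exp v) (exp (maxOther hcard m a)) / (∑ l, exp (m l) - exp (m a) + exp v) := by
  have hexp_sup (s : Finset ι) (hs : s.Nonempty) (f : ι → ℝ) :
      exp (s.sup' hs f) = s.sup' hs fun x => exp (f x) :=
    Finset.apply_sup'_eq_sup'_comp hs exp fun x y => exp_monotone.map_max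
  rw [Vterm, sum_exp_update, ← hexp_sup, Finset.sup'_update_eq_max (Finset.mem_univ a)
    (erase_nonempty_of_card hcard a), exp_monotone.map_max, maxOther]

lemma fdens_eq {ν : ℝ} (hν : 0 < ν) (m : ι → ℝ) (a : ι) (y : ℝ) :
    fdens ν m a y = exp (-y) * (∑ l, exp (m l) - exp (m a) + exp (m a + Jfun ν y))
      / ∑ l, exp (m l) := by
  have hS : 0 < ∑ l, exp (m l) :=
    Finset.sum_pos (fun l _ => exp_pos (m l)) ⟨a, Finset.mem_univ a⟩
  have hexp : exp (-ν * y) = exp (-y) * exp ((1 - ν) * y) := by rw [← exp_add]; ring_nf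
  rw [fdens, Jfun, exp_add, exp_add, exp_log hν, hexp]
  field_simp
  ring

lemma Vterm_update_mul_fdens {ν : ℝ} (hν : 0 < ν) (hcard : 2 ≤ Fintype.card ι) (m : ι → ℝ)
    (a : ι) (y : ℝ) :
    Vterm hcard (fun x => m x + Jfun ν y * kdelta a x) * fdens ν m a y
      = max (ν * exp (m a - ν * y)) (exp (maxOther hcard m a - y)) / ∑ l, exp (m l) := by
  rw [add_mul_kdelta_eq_update, Vterm_update, fdens_eq hν]
  have hS' : 0 < ∑ l, exp (m l) - exp (m a) + exp (m a + Jfun ν y) := by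
    have ha_le := Finset.single_le_sum (fun l _ => (exp_pos (m l)).le) (Finset.mem_univ a)
    linarith [exp_pos (m a + Jfun ν y)]
  have hupd : exp (m a + Jfun ν y) * exp (-y) = ν * exp (m a - ν * y) := by
    rw [← exp_add, Jfun, ← exp_log hν, ← exp_add, exp_log hν]
    ring_nf
  calc _ = max (exp (m a + Jfun ν y)) (exp (maxOther hcard m a)) * exp (-y)
        / ∑ l, exp (m l) := by field_simp
    _ = _ := by rw [max_mul_of_nonneg _ _ (exp_pos _).le, hupd, ← exp_add, ← sub_eq_add_neg]

/-- the one-step Q-value at the terminal stage equals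
`ξ(a;m) / ∑_l exp(m[l])`. -/
theorem oneStep_Q_eq_xi
    (ν : ℝ) (hν : ν ∈ Set.Ioo (0:ℝ) 1)
    (hcard : 2 ≤ Fintype.card ι) (m : ι → ℝ) (a : ι) :
    ∫ y in Set.Ioi (0:ℝ),
        Vterm hcard (fun x => m x + Jfun ν y * kdelta a x) * fdens ν m a y
      = xi ν hcard m a / ∑ l, Real.exp (m l) := by
  rw [setIntegral_congr_fun measurableSet_Ioi fun y _ =>
      Vterm_update_mul_fdens hν.1 hcard m a y, integral_div, integral_Ioi_max_mul_exp_exp hν, xi]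

end
end
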